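/- arXiv:1706.01219 — 2 statements merged into one kernel-verified Lean document; each statement's English description precedes it below -/
import Mathlib

section
/- Let n ≥ 2 and let z ∈ ℂⁿ be nonzero. Then det G(z) = ((n−1)/n)^{n−1} · |z|^{−2n}. In particular det G(z) is a positive real number. (This is the determinant computation det(g_{i j̄}) used to show that the first Chern-Ricci curvature of the perturbed Hopf metric equals n·√−1 ∂∂̄ log|z|².) -/
open Complex Matrix BigOperators

/-- `|z|² = Σⱼ zⱼ·conj(zⱼ)` as a real number. -/
noncomputable def nsq {n : ℕ} (z : Fin n → ℂ) : ℝ := ∑ j, Complex.normSq (z j)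

/-- The metric coefficient matrix
`G(z)_{ij} = |z|⁻²( ((n−1)/n)·δ_{ij} + conj(z_i)·z_j/(n|z|²) )` of the perturbed
Hopf metric `ω_g = ω₀ − (1/n)√−1 ∂∂̄ log|z|²`. -/
noncomputable def hopfG {n : ℕ} (z : Fin n → ℂ) : Matrix (Fin n) (Fin n) ℂ :=
  fun i j => ((nsq z : ℂ))⁻¹ *
    ((((n : ℂ) - 1) / (n : ℂ)) * (if i = j then 1 else 0) +
      (starRingEnd ℂ) (z i) * z j / ((n : ℂ) * (nsq z : ℂ)))

/-- The inverse metric matrix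
`H(z)_{ij} = |z|²( (n/(n−1))·δ_{ij} − z_i·conj(z_j)/((n−1)|z|²) )`. -/
noncomputable def hopfH {n : ℕ} (z : Fin n → ℂ) : Matrix (Fin n) (Fin n) ℂ :=
  fun i j => ((nsq z : ℂ)) *
    (((n : ℂ) / ((n : ℂ) - 1)) * (if i = j then 1 else 0) -
      z i * (starRingEnd ℂ) (z j) / (((n : ℂ) - 1) * (nsq z : ℂ)))

/-!
`G(z) = |z|⁻² (a·I + conj(z) zᵀ / (n|z|²))` with `a = (n−1)/n` is a scalar matrix plus a rank-one
matrix. Evaluating the characteristic polynomial of a rank-one matrix gives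
`det (a·I + u vᵀ) = aⁿ + (u·v) aⁿ⁻¹`, and here `u·v = 1/n`, so `a + u·v = 1` and
`det G(z) = |z|^{−2n} a^{n−1}`.
-/

namespace Matrix

variable {ι R : Type*} [Fintype ι] [DecidableEq ι] [CommRing R]

theorem det_scalar_add_vecMulVec (a : R) (u v : ι → R) :
    det (scalar ι a + vecMulVec u v) =
      a ^ Fintype.card ι + (u ⬝ᵥ v) * a ^ (Fintype.card ι - 1) := by
  have h := eval_charpoly (vecMulVec (-u) v) a
  rw [charpoly_vecMulVec] at h
  simpa [sub_eq_add_neg, neg_vecMulVec, smul_eq_mul] using h.symm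

end Matrix

theorem pow_pred_div_self_pos (n : ℕ) : 0 < (((n : ℝ) - 1) / n) ^ (n - 1) := by
  rcases n with _ | _ | n
  · simp
  · simp
  · apply pow_pos
    push_cast
    exact div_pos (by linarith) (by positivity)

theorem star_dotProduct_self_eq_nsq {n : ℕ} (z : Fin n → ℂ) : star z ⬝ᵥ z = (nsq z : ℂ) := by
  simp only [dotProduct, nsq, Pi.star_apply, RCLike.star_def, ofReal_sum, normSq_eq_conj_mul_self]

theorem nsq_pos {n : ℕ} {z : Fin n → ℂ} (hz : z ≠ 0) : 0 < nsq z := by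
  obtain ⟨j, hj⟩ := Function.ne_iff.1 hz
  exact Finset.sum_pos' (fun i _ => normSq_nonneg (z i)) ⟨j, Finset.mem_univ j, normSq_pos.2 hj⟩

theorem hopfG_eq_smul {n : ℕ} (z : Fin n → ℂ) :
    hopfG z = (nsq z : ℂ)⁻¹ • (scalar (Fin n) (((n : ℂ) - 1) / n) +
      vecMulVec (star z) (((n : ℂ) * nsq z)⁻¹ • z)) := by
  ext i j
  simp only [hopfG, Matrix.smul_apply, Matrix.add_apply, scalar_apply, diagonal_apply,
    vecMulVec_apply, Pi.smul_apply, Pi.star_apply, RCLike.star_def, smul_eq_mul]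
  split_ifs <;> ring

theorem det_hopfG_eq {n : ℕ} {z : Fin n → ℂ} (hz : z ≠ 0) :
    (hopfG z).det = (((n : ℂ) - 1) / n) ^ (n - 1) * ((nsq z : ℂ)⁻¹) ^ n := by
  obtain ⟨m, rfl⟩ : ∃ m, n = m + 1 :=
    Nat.exists_eq_add_one.2 (Nat.pos_of_ne_zero (by rintro rfl; exact hz (Subsingleton.elim _ _)))
  have hs : (nsq z : ℂ) ≠ 0 := by exact_mod_cast (nsq_pos hz).ne'
  have ha_add_dot :
      ((m + 1 : ℕ) - 1 : ℂ) / (m + 1 : ℕ) + ((m + 1 : ℕ) * (nsq z : ℂ))⁻¹ * nsq z = 1 := by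
    field_simp
    push_cast
    ring
  rw [hopfG_eq_smul, det_smul, det_scalar_add_vecMulVec, dotProduct_smul,
    star_dotProduct_self_eq_nsq, Fintype.card_fin, smul_eq_mul, Nat.add_sub_cancel]
  linear_combination
    ((nsq z : ℂ)⁻¹ ^ (m + 1) * (((m + 1 : ℕ) - 1 : ℂ) / (m + 1 : ℕ)) ^ m) * ha_add_dot

theorem det_hopfG_general (n : ℕ) (z : Fin n → ℂ) (hz : z ≠ 0) :
    (hopfG z).det = (((((n : ℝ) - 1) / n) ^ (n - 1) * ((nsq z)⁻¹) ^ n : ℝ) : ℂ) ∧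
    0 < (((n : ℝ) - 1) / n) ^ (n - 1) * ((nsq z)⁻¹) ^ n := by
  refine ⟨?_, mul_pos (pow_pred_div_self_pos n) (pow_pos (inv_pos.2 (nsq_pos hz)) n)⟩
  rw [det_hopfG_eq hz]
  push_cast
  ring

/-- `det G(z) = ((n−1)/n)^{n−1}·|z|^{−2n}`; in particular `det G(z)` is a positive
real number. -/
theorem det_hopfG (n : ℕ) (hn : 2 ≤ n) (z : Fin n → ℂ) (hz : z ≠ 0) :
    (hopfG z).det = (((((n : ℝ) - 1) / n) ^ (n - 1) * ((nsq z)⁻¹) ^ n : ℝ) : ℂ) ∧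
    0 < (((n : ℝ) - 1) / n) ^ (n - 1) * ((nsq z)⁻¹) ^ n :=
  det_hopfG_general n z hz
end

section
/- Let n ≥ 2 and let z ∈ ℂⁿ be nonzero. Then for every index i, Σ_{k=1}^n H(z)_{k i}·conj(z_k) − (Σ_{q=1}^n H(z)_{q q})·conj(z_i) = −n·|z|²·conj(z_i). (This contraction identity is the component form of the formula ∂̄*ω_g = √−1 Λ ∂ω_g = −n√−1 ∂log|z|² for the perturbed Hopf metric, which yields (1/2)(∂∂*ω_g + ∂̄∂̄*ω_g) = n√−1 ∂∂̄ log|z|².) -/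
open Complex Matrix BigOperators

/-!
The inverse metric is `H(z) = α·I − β·z z̄ᵀ` with `α = n|z|²/(n−1)` and `β = 1/(n−1)`. For any matrix
`α·I − β·v wᵀ` contracting with `w` and subtracting the trace times `w` cancels the rank-one part,
since both produce `β (w·v) w`, and leaves `α(1 − n)·w`; here `α(1 − n) = −n|z|²`.
-/

theorem vecMul_smul_one_sub_vecMulVec_sub_trace_smul {R m : Type*} [CommRing R] [Fintype m]
    [DecidableEq m] (α β : R) (v w : m → R) :
    w ᵥ* (α • 1 - β • vecMulVec v w) - trace (α • 1 - β • vecMulVec v w) • w =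
      (α * (1 - Fintype.card m)) • w := by
  rw [vecMul_sub, vecMul_smul, vecMul_smul, vecMul_one, vecMul_vecMulVec, trace_sub,
    trace_smul, trace_smul, trace_one, trace_vecMulVec, dotProduct_comm v w]
  module

theorem ofReal_nsq {n : ℕ} (z : Fin n → ℂ) : (nsq z : ℂ) = star z ⬝ᵥ z := by
  simp [nsq, dotProduct, Complex.normSq_eq_conj_mul_self]

open scoped ComplexOrder in
theorem hopfH_eq_smul_one_sub_vecMulVec {n : ℕ} (z : Fin n → ℂ) :
    hopfH z = (nsq z * n / (n - 1) : ℂ) • 1 - ((n : ℂ) - 1)⁻¹ • vecMulVec z (star z) := by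
  by_cases hz : z = 0
  · subst hz
    ext i j
    simp [hopfH, nsq]
  have hS : (nsq z : ℂ) ≠ 0 := by
    rwa [ofReal_nsq, Ne, dotProduct_star_self_eq_zero]
  ext i j
  simp only [hopfH, Matrix.sub_apply, Matrix.smul_apply, one_apply, vecMulVec_apply,
    Pi.star_apply, Complex.star_def, smul_eq_mul]
  split_ifs <;> field_simp

theorem hopfH_contract_sub_trace_general (n : ℕ) (hn : 2 ≤ n) (z : Fin n → ℂ) :
    ∀ i, (∑ k, hopfH z k i * (starRingEnd ℂ) (z k)) -
        (∑ q, hopfH z q q) * (starRingEnd ℂ) (z i) =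
      -(n : ℂ) * (nsq z : ℂ) * (starRingEnd ℂ) (z i) := by
  intro i
  have hn1 : (n : ℂ) - 1 ≠ 0 := sub_ne_zero.mpr (by exact_mod_cast (by omega : n ≠ 1))
  have key := congrFun (vecMul_smul_one_sub_vecMulVec_sub_trace_smul
    (nsq z * n / (n - 1) : ℂ) ((n : ℂ) - 1)⁻¹ z (star z)) i
  rw [← hopfH_eq_smul_one_sub_vecMulVec, Fintype.card_fin] at key
  simp only [Pi.sub_apply, Pi.smul_apply, vecMul, dotProduct, trace, diag, Pi.star_apply,
    RCLike.star_def, smul_eq_mul] at key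
  simp only [mul_comm (hopfH z _ i)]
  rw [key]
  field_simp
  ring

/-- `Σ_k g^{k ī} z̄^k − (Σ_q g^{q q̄}) z̄^i = −n|z|² z̄^i`, the component form of
`∂̄*ω_g = −n√−1 ∂log|z|²` for the perturbed Hopf metric. -/
theorem hopfH_contract_sub_trace (n : ℕ) (hn : 2 ≤ n) (z : Fin n → ℂ) (hz : z ≠ 0) :
    ∀ i, (∑ k, hopfH z k i * (starRingEnd ℂ) (z k)) -
        (∑ q, hopfH z q q) * (starRingEnd ℂ) (z i) =
      -(n : ℂ) * (nsq z : ℂ) * (starRingEnd ℂ) (z i) :=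
  hopfH_contract_sub_trace_general n hn z
end
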